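/- For every nonnegative integer k and every complex z with |z| > k, the inverse Pochhammer symbol admits the convergent expansion 1/((z)_{k+1}) = Σ_{κ=0}^{∞} (-1)^κ S²(k+κ, k) / z^{k+κ+1}. -/

import Mathlib

noncomputable def poch (z : ℂ) (m : ℕ) : ℂ := ∏ i ∈ Finset.range m, (z + i)

def S2 : ℕ → ℕ → ℕ
  | 0, 0 => 1
  | 0, _ + 1 => 0
  | _ + 1, 0 => 0
  | n + 1, k + 1 => S2 n k + (k + 1) * S2 n (k + 1)

/-!
Since `1/(z)_{k+2} = 1/(z)_{k+1} · 1/(z+k+1)` and `1/(z+k+1) = Σ_j (-(k+1))^j / z^{j+1}` for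
`|z| > k+1`, the expansion for `k+1` is the Cauchy product of the one for `k` with a geometric
series. Its coefficients match because of the convolution identity
`S²(n+1, k+1) = Σ_{m ≤ n} S²(m, k) (k+1)^{n-m}`, which is the recurrence of `S²` unrolled;
absolute convergence, needed for the Cauchy product, is automatic in `ℂ`.
-/

open Finset

theorem HasSum.sum_antidiagonal_mul_of_summable_norm {R : Type*} [NormedRing R] [CompleteSpace R]
    {f g : ℕ → R} {a b : R} (hf : HasSum f a) (hg : HasSum g b)
    (hf' : Summable fun n => ‖f n‖) (hg' : Summable fun n => ‖g n‖) :
    HasSum (fun n => ∑ kl ∈ antidiagonal n, f kl.1 * g kl.2) (a * b) := by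
  rw [← hf.tsum_eq, ← hg.tsum_eq, tsum_mul_tsum_eq_tsum_sum_antidiagonal_of_summable_norm hf' hg']
  exact (summable_norm_sum_mul_antidiagonal_of_summable_norm hf' hg').of_norm.hasSum

theorem hasSum_geometric_neg_div {𝕜 : Type*} [NormedField 𝕜] [CompleteSpace 𝕜] {w z : 𝕜}
    (h : ‖w‖ < ‖z‖) : HasSum (fun j : ℕ => (-w / z) ^ j / z) (1 / (z + w)) := by
  have hz : z ≠ 0 := norm_pos_iff.mp ((norm_nonneg w).trans_lt h)
  have hratio : ‖-w / z‖ < 1 := by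
    rwa [norm_div, norm_neg, div_lt_one (norm_pos_iff.mpr hz)]
  convert (hasSum_geometric_of_norm_lt_one hratio).div_const z using 1
  rw [neg_div, sub_neg_eq_add, one_add_div hz, inv_div, div_div_cancel_left' hz, one_div]

theorem poch_succ (z : ℂ) (m : ℕ) : poch z (m + 1) = poch z m * (z + m) :=
  prod_range_succ _ _

theorem S2_eq_zero_of_lt {n m : ℕ} (h : n < m) : S2 n m = 0 := by
  induction n generalizing m with
  | zero => obtain ⟨m, rfl⟩ := Nat.exists_eq_succ_of_ne_zero h.ne'; rfl
  | succ n ih =>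
    obtain ⟨m, rfl⟩ := Nat.exists_eq_succ_of_ne_zero (Nat.zero_lt_of_lt h).ne'
    simp [S2, ih (by omega : n < m), ih (by omega : n < m + 1)]

theorem S2_add_succ_succ (k κ : ℕ) :
    S2 (k + κ + 1) (k + 1) = ∑ p ∈ antidiagonal κ, S2 (k + p.1) k * (k + 1) ^ p.2 := by
  induction κ with
  | zero => simp [S2, S2_eq_zero_of_lt (Nat.lt_succ_self k)]
  | succ κ ih =>
    rw [Finset.Nat.sum_antidiagonal_succ', ← add_assoc, S2, ih, mul_sum, pow_zero, mul_one]
    congr 1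
    exact sum_congr rfl fun p _ => by ring

theorem invPoch_coeff_succ (z : ℂ) (k κ : ℕ) :
    (-1) ^ κ * (S2 (k + 1 + κ) (k + 1) : ℂ) / z ^ (k + 1 + κ + 1) =
      ∑ p ∈ antidiagonal κ, (-1) ^ p.1 * (S2 (k + p.1) k : ℂ) / z ^ (k + p.1 + 1) *
        ((-(k + 1 : ℂ) / z) ^ p.2 / z) := by
  rw [add_right_comm k 1 κ, S2_add_succ_succ]
  push_cast
  rw [mul_sum, sum_div]
  refine sum_congr rfl fun p hp => ?_
  obtain rfl := mem_antidiagonal.mp hp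
  rw [div_pow, neg_pow ((k : ℂ) + 1)]
  ring

theorem stmt13 (k : ℕ) (z : ℂ) (hz : (k : ℝ) < ‖z‖) :
    HasSum (fun κ : ℕ => (-1) ^ κ * (S2 (k + κ) k : ℂ) / z ^ (k + κ + 1))
      (1 / poch z (k + 1)) := by
  induction k with
  | zero =>
    convert hasSum_single (f := fun κ : ℕ => (-1) ^ κ * (S2 (0 + κ) 0 : ℂ) / z ^ (0 + κ + 1)) 0
      fun κ hκ => by obtain ⟨κ, rfl⟩ := Nat.exists_eq_succ_of_ne_zero hκ; simp [S2]
    all_goals simp [S2, poch]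
  | succ k ih =>
    have hzk : (k : ℝ) < ‖z‖ := by push_cast at hz; linarith
    have hgeom : HasSum (fun j : ℕ => (-(k + 1 : ℂ) / z) ^ j / z) (1 / (z + (k + 1))) :=
      hasSum_geometric_neg_div (by exact_mod_cast hz)
    have hprod := (ih hzk).sum_antidiagonal_mul_of_summable_norm hgeom
      (summable_norm_iff.mpr (ih hzk).summable) (summable_norm_iff.mpr hgeom.summable)
    rw [poch_succ, ← one_div_mul_one_div]
    push_cast
    simpa only [invPoch_coeff_succ] using hprod
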